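/- arXiv:1502.00159 — 6 statements merged into one kernel-verified Lean document; each statement's English description precedes it below -/
import Mathlib

section
/- Let (X,μ) be a measure space, 0<p<∞, and Q a nonempty subset of (0,∞) with m_Q = inf Q > 0. Then IL_{p,Q}(X,μ) = L_{p,m_Q}(X,μ), and for every f ∈ L_{p,m_Q}(X,μ) one has ‖f‖_{L_{p,m_Q}} ≤ sup_{q∈Q} ‖f‖_{L_{p,q}} ≤ max{1, (m_Q/p)^{1/m_Q}} · ‖f‖_{L_{p,m_Q}}. -/
/-!
Write `I(e) = ∫_0^∞ (t^{1/p} f*(t))^e dt/t`, so that `‖f‖_{L_{p,q}} = I(q)^{1/q}`.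
Since `f*` is decreasing, `(t^{1/p} f*(t))^m ≤ (m/p) I(m)` for every `t > 0`; splitting the power
`q = (q - m) + m` then gives `I(q) ≤ ((m/p) I(m))^{(q-m)/m} I(m)`, that is
`‖f‖_{L_{p,q}} ≤ (m/p)^{1/m - 1/q} ‖f‖_{L_{p,m}}` for `q ≥ m`, and `(m/p)^{1/m - 1/q}` is at most
`max 1 ((m/p)^{1/m})`. Conversely, letting `q → m_Q` inside `Q`, Fatou's lemma gives
`I(m_Q) ≤ liminf I(q)`, hence `‖f‖_{L_{p,m_Q}} ≤ sup_{q∈Q} ‖f‖_{L_{p,q}}`.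
-/

open MeasureTheory Set ENNReal

noncomputable section

variable {X : Type*} [MeasurableSpace X]

/-- The distribution function `d_f(α) = μ {x : |f x| > α}`. -/
def distFun (μ : Measure X) (f : X → ℝ) (α : ℝ) : ℝ≥0∞ :=
  μ {x | α < |f x|}

/-- The decreasing rearrangement `f*(t) = inf {s > 0 : d_f(s) ≤ t}`, with `inf ∅ = ∞`. -/
def rearr (μ : Measure X) (f : X → ℝ) (t : ℝ) : ℝ≥0∞ :=
  ⨅ (s : ℝ) (_ : 0 < s ∧ distFun μ f s ≤ ENNReal.ofReal t), ENNReal.ofReal s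

/-- The Lorentz quasi-norm `‖f‖_{L_{p,q}}` (for `q = ∞` the weak norm `sup_t t^{1/p} f*(t)`). -/
def lorentzNorm (μ : Measure X) (f : X → ℝ) (p q : ℝ≥0∞) : ℝ≥0∞ :=
  if q = ∞ then ⨆ t ∈ Ioi (0 : ℝ), ENNReal.ofReal t ^ (1 / p).toReal * rearr μ f t
  else (∫⁻ t in Ioi (0 : ℝ),
      (ENNReal.ofReal t ^ (1 / p).toReal * rearr μ f t) ^ q.toReal / ENNReal.ofReal t) ^
      (1 / q.toReal)

/-- The Lorentz space `L_{p,q}(X, μ)`, as the set of measurable functions with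
finite Lorentz quasi-norm. -/
def Lorentz (μ : Measure X) (p q : ℝ≥0∞) : Set (X → ℝ) :=
  {f | Measurable f ∧ lorentzNorm μ f p q < ∞}

open Filter Topology

namespace ENNReal

lemma rpow_sub_le_max_one (x : ℝ≥0∞) {a b : ℝ} (hb : 0 ≤ b) (hba : b ≤ a) :
    x ^ (a - b) ≤ max 1 (x ^ a) := by
  rcases le_or_gt x 1 with hx | hx
  · exact le_max_of_le_left (rpow_le_one hx (sub_nonneg.2 hba))
  · exact le_max_of_le_right (rpow_le_rpow_of_exponent_le hx.le (by linarith))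

lemma tendsto_const_rpow_of_pos {ι : Type*} {l : Filter ι} (x : ℝ≥0∞) {a : ι → ℝ} {e : ℝ}
    (he : 0 < e) (ha : Tendsto a l (𝓝 e)) : Tendsto (fun i => x ^ a i) l (𝓝 (x ^ e)) := by
  have hpos : ∀ᶠ i in l, 0 < a i := ha.eventually (lt_mem_nhds he)
  rcases eq_or_ne x 0 with rfl | hx0
  · rw [zero_rpow_of_pos he]
    exact tendsto_const_nhds.congr' <| hpos.mono fun i hi => (zero_rpow_of_pos hi).symm
  rcases eq_or_ne x ∞ with rfl | hxt
  · rw [top_rpow_of_pos he]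
    exact tendsto_const_nhds.congr' <| hpos.mono fun i hi => (top_rpow_of_pos hi).symm
  have hx : 0 < x.toReal := toReal_pos hx0 hxt
  have hexp : ∀ y : ℝ, x ^ y = ENNReal.ofReal (Real.exp (Real.log x.toReal * y)) := fun y => by
    rw [← Real.rpow_def_of_pos hx, ← ofReal_rpow_of_pos hx, ofReal_toReal hxt]
  simp only [hexp]
  exact (ENNReal.continuous_ofReal.tendsto _).comp
    ((Real.continuous_exp.tendsto _).comp (ha.const_mul _))

lemma ofReal_rpow_mul_rpow_div_ofReal {c e s : ℝ} (he : 0 ≤ e) (hs : 0 < s) (r : ℝ≥0∞) :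
    (ENNReal.ofReal s ^ c * r) ^ e / ENNReal.ofReal s =
      r ^ e * ENNReal.ofReal (s ^ (c * e - 1)) := by
  rw [mul_rpow_of_nonneg _ _ he, ← rpow_mul, ofReal_rpow_of_pos hs,
    mul_comm (ENNReal.ofReal (s ^ (c * e))), mul_div_assoc, ← ofReal_div_of_pos hs,
    Real.rpow_sub hs, Real.rpow_one]

end ENNReal

lemma lintegral_Ioc_rpow_sub_one {a t : ℝ} (ha : 0 < a) (ht : 0 ≤ t) :
    ∫⁻ s in Ioc (0 : ℝ) t, ENNReal.ofReal (s ^ (a - 1)) = ENNReal.ofReal (t ^ a / a) := by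
  rw [← ofReal_integral_eq_lintegral_ofReal]
  · rw [← intervalIntegral.integral_of_le ht, integral_rpow (Or.inl (by linarith)),
      sub_add_cancel, Real.zero_rpow ha.ne', sub_zero]
  · exact (intervalIntegral.intervalIntegrable_rpow' (by linarith)).1
  · filter_upwards [ae_restrict_mem measurableSet_Ioc] with s hs
    exact Real.rpow_nonneg hs.1.le _

variable {μ : Measure X} {f : X → ℝ}

lemma antitone_rearr : Antitone (rearr μ f) := fun _ _ h =>
  le_iInf₂ fun s hs => iInf₂_le s ⟨hs.1, hs.2.trans (ENNReal.ofReal_le_ofReal h)⟩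

def lorentzIntegral (μ : Measure X) (f : X → ℝ) (c e : ℝ) : ℝ≥0∞ :=
  ∫⁻ t in Ioi (0 : ℝ), (ENNReal.ofReal t ^ c * rearr μ f t) ^ e / ENNReal.ofReal t

lemma measurable_lorentzIntegrand (c e : ℝ) :
    Measurable fun t : ℝ => (ENNReal.ofReal t ^ c * rearr μ f t) ^ e / ENNReal.ofReal t :=
  (((ENNReal.measurable_ofReal.pow_const c).mul antitone_rearr.measurable).pow_const e).div
    ENNReal.measurable_ofReal

lemma lorentzNorm_eq_lorentzIntegral_rpow (p : ℝ≥0∞) {q : ℝ≥0∞} (hq : q ≠ ∞) :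
    lorentzNorm μ f p q = lorentzIntegral μ f (1 / p).toReal q.toReal ^ (1 / q.toReal) := by
  simp only [lorentzNorm, if_neg hq, lorentzIntegral]

lemma rpow_rearr_le_mul_lorentzIntegral {c e t : ℝ} (hc : 0 < c) (he : 0 < e) (ht : 0 < t) :
    (ENNReal.ofReal t ^ c * rearr μ f t) ^ e ≤
      ENNReal.ofReal (c * e) * lorentzIntegral μ f c e := by
  have hce : 0 < c * e := mul_pos hc he
  have hsmall : rearr μ f t ^ e * ENNReal.ofReal (t ^ (c * e) / (c * e)) ≤
      lorentzIntegral μ f c e :=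
    calc rearr μ f t ^ e * ENNReal.ofReal (t ^ (c * e) / (c * e))
        = ∫⁻ s in Ioc (0 : ℝ) t, rearr μ f t ^ e * ENNReal.ofReal (s ^ (c * e - 1)) := by
          rw [lintegral_const_mul _ (by fun_prop), lintegral_Ioc_rpow_sub_one hce ht.le]
      _ ≤ ∫⁻ s in Ioc (0 : ℝ) t,
            (ENNReal.ofReal s ^ c * rearr μ f s) ^ e / ENNReal.ofReal s := by
          refine setLIntegral_mono' measurableSet_Ioc fun s hs => ?_
          rw [ENNReal.ofReal_rpow_mul_rpow_div_ofReal he.le hs.1]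
          gcongr
          exact antitone_rearr hs.2
      _ ≤ lorentzIntegral μ f c e := lintegral_mono_set Ioc_subset_Ioi_self
  calc (ENNReal.ofReal t ^ c * rearr μ f t) ^ e
      = ENNReal.ofReal (c * e) * (rearr μ f t ^ e * ENNReal.ofReal (t ^ (c * e) / (c * e))) := by
        rw [ENNReal.mul_rpow_of_nonneg _ _ he.le, ← ENNReal.rpow_mul,
          ENNReal.ofReal_rpow_of_pos ht, mul_left_comm, ← ENNReal.ofReal_mul hce.le,
          mul_div_cancel₀ _ hce.ne', mul_comm]
    _ ≤ ENNReal.ofReal (c * e) * lorentzIntegral μ f c e := by gcongr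

lemma lorentzIntegral_le_rpow_mul_lorentzIntegral {c e e' : ℝ} (hc : 0 < c) (he : 0 < e)
    (hee' : e ≤ e') :
    lorentzIntegral μ f c e' ≤
      (ENNReal.ofReal (c * e) * lorentzIntegral μ f c e) ^ ((e' - e) / e) *
        lorentzIntegral μ f c e := by
  set W := (ENNReal.ofReal (c * e) * lorentzIntegral μ f c e) ^ (1 / e)
  have hweak : ∀ t : ℝ, 0 < t → ENNReal.ofReal t ^ c * rearr μ f t ≤ W := fun t ht =>
    calc ENNReal.ofReal t ^ c * rearr μ f t
        = ((ENNReal.ofReal t ^ c * rearr μ f t) ^ e) ^ (1 / e) := by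
          rw [← ENNReal.rpow_mul, mul_one_div_cancel he.ne', ENNReal.rpow_one]
      _ ≤ W := ENNReal.rpow_le_rpow (rpow_rearr_le_mul_lorentzIntegral hc he ht) (by positivity)
  calc lorentzIntegral μ f c e'
      ≤ ∫⁻ t in Ioi (0 : ℝ),
          W ^ (e' - e) * ((ENNReal.ofReal t ^ c * rearr μ f t) ^ e / ENNReal.ofReal t) := by
        refine setLIntegral_mono' measurableSet_Ioi fun t ht => ?_
        rw [← sub_add_cancel e' e, ENNReal.rpow_add_of_nonneg _ _ (by linarith) he.le,
          add_sub_cancel_right, mul_div_assoc]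
        gcongr
        exact hweak t ht
    _ = W ^ (e' - e) * lorentzIntegral μ f c e :=
        lintegral_const_mul _ (measurable_lorentzIntegrand c e)
    _ = _ := by rw [← ENNReal.rpow_mul, one_div_mul_eq_div]

lemma lorentzNorm_le_rpow_mul_lorentzNorm {p m q : ℝ≥0∞} (hp0 : 0 < p) (hp : p ≠ ∞)
    (hm0 : 0 < m) (hmq : m ≤ q) (hq : q ≠ ∞) :
    lorentzNorm μ f p q ≤ (m / p) ^ (1 / m.toReal - 1 / q.toReal) * lorentzNorm μ f p m := by
  have hm : m ≠ ∞ := ne_top_of_le_ne_top hq hmq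
  have hc : 0 < (1 / p).toReal := by
    rw [one_div, ENNReal.toReal_inv]
    exact inv_pos.2 (ENNReal.toReal_pos hp0.ne' hp)
  have hce : ENNReal.ofReal ((1 / p).toReal * m.toReal) = m / p := by
    rw [one_div, ENNReal.toReal_inv, inv_mul_eq_div, ← ENNReal.toReal_div,
      ENNReal.ofReal_toReal (ENNReal.div_lt_top hm hp0.ne').ne]
  set c := (1 / p).toReal
  set e := m.toReal
  set e' := q.toReal
  set I := lorentzIntegral μ f c e
  have he : 0 < e := ENNReal.toReal_pos hm0.ne' hm
  have hee' : e ≤ e' := ENNReal.toReal_mono hq hmq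
  have he' : 0 < e' := he.trans_le hee'
  have hgap : 0 ≤ 1 / e - 1 / e' := sub_nonneg.2 (one_div_le_one_div_of_le he hee')
  have hbound := lorentzIntegral_le_rpow_mul_lorentzIntegral (μ := μ) (f := f) hc he hee'
  rw [hce] at hbound
  rw [lorentzNorm_eq_lorentzIntegral_rpow p hq, lorentzNorm_eq_lorentzIntegral_rpow p hm]
  calc lorentzIntegral μ f c e' ^ (1 / e')
      ≤ ((m / p * I) ^ ((e' - e) / e) * I) ^ (1 / e') := by gcongr
    _ = (m / p * I) ^ (1 / e - 1 / e') * I ^ (1 / e') := by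
        rw [ENNReal.mul_rpow_of_nonneg _ _ (by positivity), ← ENNReal.rpow_mul]
        congr 2
        field_simp
    _ = (m / p) ^ (1 / e - 1 / e') * I ^ (1 / e) := by
        rw [ENNReal.mul_rpow_of_nonneg _ _ hgap, mul_assoc,
          ← ENNReal.rpow_add_of_nonneg _ _ hgap (by positivity), sub_add_cancel]

lemma iSup_lorentzNorm_le {p m : ℝ≥0∞} {Q : Set ℝ≥0∞} (hp0 : 0 < p) (hp : p ≠ ∞) (hm0 : 0 < m)
    (hmQ : ∀ q ∈ Q, m ≤ q) (hQ : ∀ q ∈ Q, q ≠ ∞) :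
    ⨆ q ∈ Q, lorentzNorm μ f p q ≤ max 1 ((m / p) ^ (1 / m).toReal) * lorentzNorm μ f p m := by
  refine iSup₂_le fun q hq => (lorentzNorm_le_rpow_mul_lorentzNorm hp0 hp hm0 (hmQ q hq)
    (hQ q hq)).trans ?_
  rw [one_div m, ENNReal.toReal_inv, inv_eq_one_div]
  gcongr
  exact ENNReal.rpow_sub_le_max_one _ (by positivity) <| one_div_le_one_div_of_le
    (ENNReal.toReal_pos hm0.ne' (ne_top_of_le_ne_top (hQ q hq) (hmQ q hq)))
    (ENNReal.toReal_mono (hQ q hq) (hmQ q hq))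

lemma lorentzIntegral_le_liminf {ι : Type*} {l : Filter ι} [l.NeBot] [l.IsCountablyGenerated]
    {c e : ℝ} {a : ι → ℝ} (he : 0 < e) (ha : Tendsto a l (𝓝 e)) :
    lorentzIntegral μ f c e ≤ liminf (fun i => lorentzIntegral μ f c (a i)) l := by
  have hpointwise : ∀ t ∈ Ioi (0 : ℝ),
      (ENNReal.ofReal t ^ c * rearr μ f t) ^ e / ENNReal.ofReal t =
        liminf (fun i => (ENNReal.ofReal t ^ c * rearr μ f t) ^ a i / ENNReal.ofReal t) l :=
    fun t ht => (ENNReal.Tendsto.div_const (ENNReal.tendsto_const_rpow_of_pos _ he ha)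
      (Or.inr (ENNReal.ofReal_pos.2 ht).ne')).liminf_eq.symm
  calc lorentzIntegral μ f c e
      = ∫⁻ t in Ioi (0 : ℝ),
          liminf (fun i => (ENNReal.ofReal t ^ c * rearr μ f t) ^ a i / ENNReal.ofReal t) l :=
        setLIntegral_congr_fun measurableSet_Ioi hpointwise
    _ ≤ liminf (fun i => lorentzIntegral μ f c (a i)) l :=
        lintegral_liminf_le fun i => measurable_lorentzIntegrand c (a i)

lemma lorentzNorm_le_of_tendsto {ι : Type*} {l : Filter ι} [l.NeBot] [l.IsCountablyGenerated]
    {p m S : ℝ≥0∞} {u : ι → ℝ≥0∞} (hm0 : 0 < m) (hm : m ≠ ∞) (hu : Tendsto u l (𝓝 m))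
    (hS : ∀ᶠ i in l, lorentzNorm μ f p (u i) ≤ S) : lorentzNorm μ f p m ≤ S := by
  set c := (1 / p).toReal
  have he : 0 < m.toReal := ENNReal.toReal_pos hm0.ne' hm
  have ha : Tendsto (fun i => (u i).toReal) l (𝓝 m.toReal) :=
    (ENNReal.tendsto_toReal hm).comp hu
  have hfin : ∀ᶠ i in l, u i ≠ ∞ := hu.eventually_ne hm
  have hpos : ∀ᶠ i in l, 0 < (u i).toReal := ha.eventually (lt_mem_nhds he)
  have hbound : ∀ᶠ i in l, lorentzIntegral μ f c (u i).toReal ≤ S ^ (u i).toReal := by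
    filter_upwards [hS, hfin, hpos] with i hSi hfini hposi
    rw [lorentzNorm_eq_lorentzIntegral_rpow p hfini] at hSi
    calc lorentzIntegral μ f c (u i).toReal
        = (lorentzIntegral μ f c (u i).toReal ^ (1 / (u i).toReal)) ^ (u i).toReal := by
          rw [← ENNReal.rpow_mul, one_div_mul_cancel hposi.ne', ENNReal.rpow_one]
      _ ≤ S ^ (u i).toReal := by gcongr
  have hI : lorentzIntegral μ f c m.toReal ≤ S ^ m.toReal :=
    calc lorentzIntegral μ f c m.toReal
        ≤ liminf (fun i => lorentzIntegral μ f c (u i).toReal) l :=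
          lorentzIntegral_le_liminf he ha
      _ ≤ liminf (fun i => S ^ (u i).toReal) l := liminf_le_liminf hbound
      _ = S ^ m.toReal := (ENNReal.tendsto_const_rpow_of_pos S he ha).liminf_eq
  calc lorentzNorm μ f p m = lorentzIntegral μ f c m.toReal ^ (1 / m.toReal) :=
        lorentzNorm_eq_lorentzIntegral_rpow p hm
    _ ≤ (S ^ m.toReal) ^ (1 / m.toReal) := by gcongr
    _ = S := by rw [← ENNReal.rpow_mul, mul_one_div_cancel he.ne', ENNReal.rpow_one]

lemma lorentzNorm_sInf_le_iSup {p : ℝ≥0∞} {Q : Set ℝ≥0∞} (hQne : Q.Nonempty)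
    (hQ : ∀ q ∈ Q, q ≠ ∞) (hmQ : 0 < sInf Q) :
    lorentzNorm μ f p (sInf Q) ≤ ⨆ q ∈ Q, lorentzNorm μ f p q := by
  obtain ⟨q₀, hq₀⟩ := hQne
  have : (𝓝[Q] sInf Q).NeBot := mem_closure_iff_nhdsWithin_neBot.1 (sInf_mem_closure ⟨q₀, hq₀⟩)
  exact lorentzNorm_le_of_tendsto (l := 𝓝[Q] sInf Q) (u := id) hmQ
    (ne_top_of_le_ne_top (hQ q₀ hq₀) (sInf_le hq₀)) (tendsto_id.mono_left nhdsWithin_le_nhds)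
    (eventually_nhdsWithin_of_forall fun q hq => le_biSup _ hq)

/-- `IL_{p,Q}(X,μ) = L_{p,m_Q}(X,μ)` together with the norm estimate
`‖f‖_{L_{p,m_Q}} ≤ sup_{q∈Q} ‖f‖_{L_{p,q}} ≤ max{1, (m_Q/p)^{1/m_Q}} ‖f‖_{L_{p,m_Q}}`. -/
theorem stmt0 (μ : Measure X) (p : ℝ≥0∞) (hp0 : 0 < p) (hp : p ≠ ∞)
    (Q : Set ℝ≥0∞) (hQne : Q.Nonempty) (hQ : Q ⊆ Ioo 0 ∞) (hmQ : 0 < sInf Q) :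
    {f : X → ℝ | (∀ q ∈ Q, f ∈ Lorentz μ p q) ∧ (⨆ q ∈ Q, lorentzNorm μ f p q) < ∞}
      = Lorentz μ p (sInf Q) ∧
    ∀ f ∈ Lorentz μ p (sInf Q),
      lorentzNorm μ f p (sInf Q) ≤ (⨆ q ∈ Q, lorentzNorm μ f p q) ∧
      (⨆ q ∈ Q, lorentzNorm μ f p q) ≤
        max 1 ((sInf Q / p) ^ (1 / sInf Q).toReal) * lorentzNorm μ f p (sInf Q) := by
  obtain ⟨q₀, hq₀⟩ := hQne
  have hQtop : ∀ q ∈ Q, q ≠ ∞ := fun q hq => (hQ hq).2.ne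
  have hlower (f : X → ℝ) := lorentzNorm_sInf_le_iSup (μ := μ) (f := f) (p := p) ⟨q₀, hq₀⟩
    hQtop hmQ
  have hupper (f : X → ℝ) := iSup_lorentzNorm_le (μ := μ) (f := f) hp0 hp hmQ
    (fun q hq => sInf_le hq) hQtop
  have hconst : max 1 ((sInf Q / p) ^ (1 / sInf Q).toReal) ≠ ∞ :=
    max_ne_top one_ne_top (ENNReal.rpow_ne_top_of_nonneg (by positivity)
      (ENNReal.div_lt_top (ne_top_of_le_ne_top (hQtop q₀ hq₀) (sInf_le hq₀)) hp0.ne').ne)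
  have hfinite {f : X → ℝ} (hf : lorentzNorm μ f p (sInf Q) < ∞) :
      ⨆ q ∈ Q, lorentzNorm μ f p q < ∞ :=
    (hupper f).trans_lt (ENNReal.mul_lt_top hconst.lt_top hf)
  refine ⟨Set.ext fun f => ⟨fun ⟨hmem, hsup⟩ => ⟨(hmem q₀ hq₀).1, (hlower f).trans_lt hsup⟩,
    fun ⟨hmeas, hfin⟩ => ⟨fun q hq => ⟨hmeas, (le_biSup _ hq).trans_lt (hfinite hfin)⟩,
      hfinite hfin⟩⟩, fun f _ => ⟨hlower f, hupper f⟩⟩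
end
end

section
/- Let (X,μ) be a measure space, 0<q≤∞ and J ⊆ (0,∞) with m_J = inf J > 0. If m_J ∈ J and M_J = sup J ∈ J, then ⋂_{p∈[m_J,M_J]} L_{p,q}(X,μ) = ⋂_{p∈J} L_{p,q}(X,μ) = L_{m_J,q}(X,μ) ∩ L_{M_J,q}(X,μ). -/
/-! For `p₀ ≤ p ≤ p₁` the exponent `1/p` lies between `1/p₁` and `1/p₀`, so pointwise
`t^{1/p} ≤ max (t^{1/p₁}, t^{1/p₀})`; hence the `L_{p,q}` quasi-norm is controlled by the sum of
the `L_{p₀,q}` and `L_{p₁,q}` ones, and every intersection of Lorentz spaces over a set of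
exponents containing its infimum and supremum collapses to the two endpoint spaces. -/

open MeasureTheory Set ENNReal

noncomputable section

variable {X : Type*} [MeasurableSpace X]

lemma ENNReal.rpow_mul_rpow_le_add (x y : ℝ≥0∞) {a b c r : ℝ} (hba : b ≤ a) (hac : a ≤ c)
    (hr : 0 ≤ r) : (x ^ a * y) ^ r ≤ (x ^ b * y) ^ r + (x ^ c * y) ^ r := by
  rcases le_total x 1 with hx | hx
  · exact le_add_right <| rpow_le_rpow (mul_le_mul_left (rpow_le_rpow_of_exponent_ge hx hba) y) hr
  · exact le_add_left <| rpow_le_rpow (mul_le_mul_left (rpow_le_rpow_of_exponent_le hx hac) y) hr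

lemma ENNReal.toReal_one_div_le_of_le {p p' : ℝ≥0∞} (hp : 0 < p) (h : p ≤ p') :
    (1 / p').toReal ≤ (1 / p).toReal :=
  toReal_mono (by simp [hp.ne']) (ENNReal.div_le_div_left h 1)

lemma setLIntegral_weighted_rpow_le_add {φ : ℝ → ℝ≥0∞} (hφ : Measurable φ) {a b c r : ℝ}
    (hba : b ≤ a) (hac : a ≤ c) (hr : 0 ≤ r) :
    ∫⁻ t in Ioi (0 : ℝ), (ENNReal.ofReal t ^ a * φ t) ^ r / ENNReal.ofReal t ≤
      (∫⁻ t in Ioi (0 : ℝ), (ENNReal.ofReal t ^ b * φ t) ^ r / ENNReal.ofReal t) +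
      ∫⁻ t in Ioi (0 : ℝ), (ENNReal.ofReal t ^ c * φ t) ^ r / ENNReal.ofReal t := by
  rw [← lintegral_add_left (by fun_prop)]
  refine lintegral_mono fun t => ?_
  rw [← ENNReal.add_div]
  gcongr
  exact rpow_mul_rpow_le_add _ _ hba hac hr

lemma rearr_antitone (μ : Measure X) (f : X → ℝ) : Antitone (rearr μ f) :=
  fun _ _ h => le_iInf₂ fun s hs => iInf₂_le s ⟨hs.1, hs.2.trans (ofReal_le_ofReal h)⟩

lemma measurable_rearr (μ : Measure X) (f : X → ℝ) : Measurable (rearr μ f) :=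
  (rearr_antitone μ f).measurable

lemma lorentzNorm_lt_top_of_le_of_le (μ : Measure X) {f : X → ℝ} {p₀ p p₁ q : ℝ≥0∞}
    (hp₀ : 0 < p₀) (h₀ : p₀ ≤ p) (h₁ : p ≤ p₁)
    (hf₀ : lorentzNorm μ f p₀ q < ∞) (hf₁ : lorentzNorm μ f p₁ q < ∞) :
    lorentzNorm μ f p q < ∞ := by
  have hba := toReal_one_div_le_of_le (hp₀.trans_le h₀) h₁
  have hac := toReal_one_div_le_of_le hp₀ h₀
  unfold lorentzNorm at *
  split_ifs at * with hq
  · refine lt_of_le_of_lt (iSup₂_le fun t ht => ?_) (add_lt_top.2 ⟨hf₁, hf₀⟩)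
    calc ENNReal.ofReal t ^ (1 / p).toReal * rearr μ f t
        ≤ ENNReal.ofReal t ^ (1 / p₁).toReal * rearr μ f t +
          ENNReal.ofReal t ^ (1 / p₀).toReal * rearr μ f t := by
          simpa using rpow_mul_rpow_le_add (ENNReal.ofReal t) (rearr μ f t) hba hac zero_le_one
      _ ≤ _ := add_le_add (le_biSup (fun t => ENNReal.ofReal t ^ _ * rearr μ f t) ht)
          (le_biSup (fun t => ENNReal.ofReal t ^ _ * rearr μ f t) ht)
  · rcases (toReal_nonneg (a := q)).eq_or_lt with hr | hr
    · simp [← hr]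
    have hr' : 0 < 1 / q.toReal := one_div_pos.2 hr
    rw [rpow_lt_top_iff_of_pos hr'] at *
    exact (setLIntegral_weighted_rpow_le_add (measurable_rearr μ f) hba hac hr.le).trans_lt
      (add_lt_top.2 ⟨hf₁, hf₀⟩)

lemma biInter_eq_inter_of_mem {α β : Type*} {L : α → Set β} {S : Set α} {a b : α}
    (ha : a ∈ S) (hb : b ∈ S) (h : ∀ p ∈ S, L a ∩ L b ⊆ L p) :
    ⋂ p ∈ S, L p = L a ∩ L b :=
  Subset.antisymm (subset_inter (biInter_subset_of_mem ha) (biInter_subset_of_mem hb))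
    (subset_iInter₂ h)

lemma inter_lorentz_subset_lorentz (μ : Measure X) {p₀ p p₁ : ℝ≥0∞} (q : ℝ≥0∞) (hp₀ : 0 < p₀)
    (h₀ : p₀ ≤ p) (h₁ : p ≤ p₁) : Lorentz μ p₀ q ∩ Lorentz μ p₁ q ⊆ Lorentz μ p q :=
  fun _ hf => ⟨hf.1.1, lorentzNorm_lt_top_of_le_of_le μ hp₀ h₀ h₁ hf.1.2 hf.2.2⟩

theorem stmt6_general (μ : Measure X) (q : ℝ≥0∞) (J : Set ℝ≥0∞)
    (hm : 0 < sInf J) (hmJ : sInf J ∈ J) (hMJ : sSup J ∈ J) :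
    (⋂ p ∈ Icc (sInf J) (sSup J), Lorentz μ p q) = (⋂ p ∈ J, Lorentz μ p q) ∧
    (⋂ p ∈ J, Lorentz μ p q) = Lorentz μ (sInf J) q ∩ Lorentz μ (sSup J) q := by
  have hIcc : ∀ p ∈ Icc (sInf J) (sSup J),
      Lorentz μ (sInf J) q ∩ Lorentz μ (sSup J) q ⊆ Lorentz μ p q :=
    fun p hp => inter_lorentz_subset_lorentz μ q hm hp.1 hp.2
  have hJ : ∀ p ∈ J, Lorentz μ (sInf J) q ∩ Lorentz μ (sSup J) q ⊆ Lorentz μ p q :=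
    fun p hp => hIcc p ⟨sInf_le hp, le_sSup hp⟩
  have hle : sInf J ≤ sSup J := sInf_le_sSup ⟨_, hmJ⟩
  rw [biInter_eq_inter_of_mem (left_mem_Icc.2 hle) (right_mem_Icc.2 hle) hIcc,
    biInter_eq_inter_of_mem hmJ hMJ hJ]
  exact ⟨rfl, rfl⟩

/-- If `m_J ∈ J` and `M_J ∈ J` then
`⋂_{p∈[m_J,M_J]} L_{p,q} = ⋂_{p∈J} L_{p,q} = L_{m_J,q} ∩ L_{M_J,q}`. -/
theorem stmt6 (μ : Measure X) (q : ℝ≥0∞) (hq : 0 < q) (J : Set ℝ≥0∞)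
    (hJ : J ⊆ Ioo 0 ∞) (hm : 0 < sInf J) (hmJ : sInf J ∈ J) (hMJ : sSup J ∈ J) :
    (⋂ p ∈ Icc (sInf J) (sSup J), Lorentz μ p q) = (⋂ p ∈ J, Lorentz μ p q) ∧
    (⋂ p ∈ J, Lorentz μ p q) = Lorentz μ (sInf J) q ∩ Lorentz μ (sSup J) q :=
  stmt6_general μ q J hm hmJ hMJ
end
end

section
/- Let (X,μ) be a measure space, 0<q≤∞ and J ⊆ (0,∞) with m_J = inf J > 0. If m_J ∉ J and M_J = sup J ∉ J (with M_J < ∞), then ⋂_{p∈J} L_{p,q}(X,μ) = ⋂_{p∈(m_J,M_J)} L_{p,q}(X,μ). -/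
/-! A function in `L_{a,q} ∩ L_{b,q}` with `a ≤ p ≤ b` lies in `L_{p,q}`: on `(0, 1]` the
weight `t^{1/p}` is dominated by `t^{1/b}`, and on `(1, ∞)` by `t^{1/a}`. Every `p` strictly
between `m_J` and `M_J` lies between two exponents of `J`, and conversely `J ⊆ (m_J, M_J)`
because the endpoints are not attained. -/

open MeasureTheory Set ENNReal

noncomputable section

variable {X : Type*} [MeasurableSpace X]

theorem Set.subset_Ioo_sInf_sSup {α : Type*} [CompleteLinearOrder α] {J : Set α}
    (hInf : sInf J ∉ J) (hSup : sSup J ∉ J) : J ⊆ Ioo (sInf J) (sSup J) := fun _ hp =>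
  ⟨(sInf_le hp).lt_of_ne fun h => hInf (h ▸ hp),
    (le_sSup hp).lt_of_ne fun h => hSup (h ▸ hp)⟩

theorem ENNReal.toReal_one_div_le_of_le_s9 {a p : ℝ≥0∞} (ha : a ≠ 0) (hap : a ≤ p) :
    (1 / p).toReal ≤ (1 / a).toReal :=
  toReal_mono (by simpa [div_eq_top] using ha) (ENNReal.div_le_div_left hap 1)

theorem setLIntegral_Ioi_le_add_of_le_of_le {F G H : ℝ → ℝ≥0∞} {a c : ℝ} (hac : a ≤ c)
    (hG : ∀ t ∈ Ioc a c, F t ≤ G t) (hH : ∀ t ∈ Ioi c, F t ≤ H t) :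
    ∫⁻ t in Ioi a, F t ≤ (∫⁻ t in Ioi a, G t) + ∫⁻ t in Ioi a, H t := by
  have hsplit := Ioc_union_Ioi_eq_Ioi hac
  calc ∫⁻ t in Ioi a, F t
      = (∫⁻ t in Ioc a c, F t) + ∫⁻ t in Ioi c, F t := by
        rw [← lintegral_union measurableSet_Ioi Ioc_disjoint_Ioi_same, hsplit]
    _ ≤ (∫⁻ t in Ioc a c, G t) + ∫⁻ t in Ioi c, H t :=
        add_le_add (setLIntegral_mono' measurableSet_Ioc hG)
          (setLIntegral_mono' measurableSet_Ioi hH)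
    _ ≤ (∫⁻ t in Ioi a, G t) + ∫⁻ t in Ioi a, H t := by
        rw [← hsplit]
        gcongr
        exacts [subset_union_left, subset_union_right]

/-- The function `t ↦ t^{1/p} f*(t)` whose `L^q(dt/t)` norm is the Lorentz norm. -/
def lorentzWeighted (μ : Measure X) (f : X → ℝ) (p : ℝ≥0∞) (t : ℝ) : ℝ≥0∞ :=
  ENNReal.ofReal t ^ (1 / p).toReal * rearr μ f t

section Interpolation

variable {μ : Measure X} {f : X → ℝ} {a b p q : ℝ≥0∞}

theorem lorentzNorm_eq (μ : Measure X) (f : X → ℝ) (p q : ℝ≥0∞) :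
    lorentzNorm μ f p q =
      if q = ∞ then ⨆ t ∈ Ioi (0 : ℝ), lorentzWeighted μ f p t
      else (∫⁻ t in Ioi (0 : ℝ), lorentzWeighted μ f p t ^ q.toReal / ENNReal.ofReal t) ^
        (1 / q.toReal) :=
  rfl

theorem lorentzWeighted_le_of_le_one (hp : p ≠ 0) (hpb : p ≤ b) {t : ℝ} (ht : t ≤ 1) :
    lorentzWeighted μ f p t ≤ lorentzWeighted μ f b t :=
  mul_le_mul_left (rpow_le_rpow_of_exponent_ge (ofReal_le_one.2 ht)
    (toReal_one_div_le_of_le_s9 hp hpb)) _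

theorem lorentzWeighted_le_of_one_le (ha : a ≠ 0) (hap : a ≤ p) {t : ℝ} (ht : 1 ≤ t) :
    lorentzWeighted μ f p t ≤ lorentzWeighted μ f a t :=
  mul_le_mul_left (rpow_le_rpow_of_exponent_le (one_le_ofReal.2 ht)
    (toReal_one_div_le_of_le_s9 ha hap)) _

theorem lorentzNorm_lt_top_of_le_of_le_s9 (hq : 0 < q) (ha : a ≠ 0) (hap : a ≤ p) (hpb : p ≤ b)
    (hfa : lorentzNorm μ f a q < ∞) (hfb : lorentzNorm μ f b q < ∞) :
    lorentzNorm μ f p q < ∞ := by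
  have hp : p ≠ 0 := (pos_iff_ne_zero.2 ha |>.trans_le hap).ne'
  rw [lorentzNorm_eq] at hfa hfb ⊢
  split_ifs at hfa hfb ⊢ with hqtop
  · calc (⨆ t ∈ Ioi (0 : ℝ), lorentzWeighted μ f p t)
        ≤ (⨆ t ∈ Ioi (0 : ℝ), lorentzWeighted μ f b t) +
            ⨆ t ∈ Ioi (0 : ℝ), lorentzWeighted μ f a t := by
          refine iSup₂_le fun t ht => ?_
          rcases le_total t 1 with ht1 | ht1
          · exact (lorentzWeighted_le_of_le_one hp hpb ht1).trans
              ((le_iSup₂ (f := fun t _ => lorentzWeighted μ f b t) t ht).trans le_self_add)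
          · exact (lorentzWeighted_le_of_one_le ha hap ht1).trans
              ((le_iSup₂ (f := fun t _ => lorentzWeighted μ f a t) t ht).trans le_add_self)
      _ < ∞ := add_lt_top.2 ⟨hfb, hfa⟩
  · have hq' : 0 < 1 / q.toReal := one_div_pos.2 (toReal_pos hq.ne' hqtop)
    rw [rpow_lt_top_iff_of_pos hq'] at hfa hfb ⊢
    refine (setLIntegral_Ioi_le_add_of_le_of_le zero_le_one (fun t ht => ?_)
      fun t ht => ?_).trans_lt (add_lt_top.2 ⟨hfb, hfa⟩)
    · gcongr
      exact lorentzWeighted_le_of_le_one hp hpb ht.2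
    · gcongr
      exact lorentzWeighted_le_of_one_le ha hap ht.le

end Interpolation

theorem stmt9_general (μ : Measure X) (q : ℝ≥0∞) (hq : 0 < q) (J : Set ℝ≥0∞)
    (hm : 0 < sInf J) (hmJ : sInf J ∉ J) (hMJ : sSup J ∉ J) :
    (⋂ p ∈ J, Lorentz μ p q) = ⋂ p ∈ Ioo (sInf J) (sSup J), Lorentz μ p q := by
  refine Subset.antisymm ?_ (biInter_subset_biInter_left (subset_Ioo_sInf_sSup hmJ hMJ))
  simp only [subset_def, mem_iInter]
  intro f hf p ⟨hmp, hpM⟩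
  obtain ⟨a, haJ, hap⟩ := sInf_lt_iff.1 hmp
  obtain ⟨b, hbJ, hpb⟩ := lt_sSup_iff.1 hpM
  exact ⟨(hf a haJ).1, lorentzNorm_lt_top_of_le_of_le_s9 hq (hm.trans_le (sInf_le haJ)).ne' hap.le
    hpb.le (hf a haJ).2 (hf b hbJ).2⟩

/-- If `m_J ∉ J` and `M_J ∉ J` (`M_J < ∞`) then
`⋂_{p∈J} L_{p,q} = ⋂_{p∈(m_J,M_J)} L_{p,q}`. -/
theorem stmt9 (μ : Measure X) (q : ℝ≥0∞) (hq : 0 < q) (J : Set ℝ≥0∞)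
    (hJ : J ⊆ Ioo 0 ∞) (hm : 0 < sInf J) (hmJ : sInf J ∉ J) (hMJ : sSup J ∉ J)
    (hM : sSup J ≠ ∞) :
    (⋂ p ∈ J, Lorentz μ p q) = ⋂ p ∈ Ioo (sInf J) (sSup J), Lorentz μ p q :=
  stmt9_general μ q hq J hm hmJ hMJ
end
end

section
/- Let (X,μ) be a measure space and J,Q ⊆ (0,∞) with m_J = inf J > 0, m_Q = inf Q > 0 and m_Q ∈ Q. Then IL_{J,Q}(X,μ) = A ∩ B, where A = {f ∈ ⋂_{p∈J,q∈Q} L_{p,q}(X,μ) : for every q ∈ Q, sup_{p∈J} ‖f‖_{L_{p,q}} < ∞} and B = {f ∈ ⋂_{p∈J,q∈Q} L_{p,q}(X,μ) : for every p ∈ J, sup_{q∈Q} ‖f‖_{L_{p,q}} < ∞}. -/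
open MeasureTheory Set ENNReal

noncomputable section

variable {X : Type*} [MeasurableSpace X]

/-- `IL_{J,Q}(X,μ)`: functions in every `L_{p,q}`, `p ∈ J`, `q ∈ Q`, with uniformly
bounded norms. -/
def ILJQ (μ : Measure X) (J Q : Set ℝ≥0∞) : Set (X → ℝ) :=
  {f | (∀ p ∈ J, ∀ q ∈ Q, f ∈ Lorentz μ p q) ∧
    (⨆ p ∈ J, ⨆ q ∈ Q, lorentzNorm μ f p q) < ∞}

/-
For `q₀ ≤ q` the Lorentz norms satisfy `‖f‖_{p,q} ≤ C(p, q₀) ‖f‖_{p,q₀}` with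
`C(p, q₀) = max 1 (q₀/p)^{1/q₀}`. Because `f*` is decreasing, the part `(0, t)` of the integral
defining `‖f‖_{p,q₀}^{q₀}` is at least `(p/q₀) (t^{1/p} f*(t))^{q₀}`, which gives the weak bound
`t^{1/p} f*(t) ≤ (q₀/p)^{1/q₀} ‖f‖_{p,q₀}`; splitting `(t^{1/p} f*(t))^q` as the power `q - q₀` of
this bounded quantity times the power `q₀` then bounds `‖f‖_{p,q}`. The constant decreases in `p`,
so on `J` it is at most `C(m_J, m_Q)`, and all the norms `‖f‖_{p,q}`, `p ∈ J`, `q ∈ Q`, are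
controlled by `C(m_J, m_Q) sup_{p ∈ J} ‖f‖_{p,m_Q}`, which is finite for `f ∈ A`.
-/

lemma lintegral_Ioo_ofReal_rpow_sub_one {c t : ℝ} (hc : 0 < c) (ht : 0 < t) :
    ∫⁻ s in Ioo 0 t, ENNReal.ofReal s ^ (c - 1) = ENNReal.ofReal (t ^ c / c) := by
  have hint : IntegrableOn (fun s : ℝ => s ^ (c - 1)) (Ioo 0 t) :=
    (intervalIntegral.intervalIntegrable_rpow' (by linarith)).1.mono_set Ioo_subset_Ioc_self
  calc ∫⁻ s in Ioo 0 t, ENNReal.ofReal s ^ (c - 1)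
      = ∫⁻ s in Ioo 0 t, ENNReal.ofReal (s ^ (c - 1)) :=
        setLIntegral_congr_fun measurableSet_Ioo fun s hs => ENNReal.ofReal_rpow_of_pos hs.1
    _ = ENNReal.ofReal (∫ s in Ioo 0 t, s ^ (c - 1)) :=
        (ofReal_integral_eq_lintegral_ofReal hint (ae_restrict_of_forall_mem measurableSet_Ioo
          fun s hs => Real.rpow_nonneg hs.1.le _)).symm
    _ = ENNReal.ofReal (t ^ c / c) := by
        rw [← integral_Ioc_eq_integral_Ioo, ← intervalIntegral.integral_of_le ht.le,
          integral_rpow (Or.inl (by linarith))]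
        simp [Real.zero_rpow hc.ne']

lemma lorentzNorm_rpow_eq_lintegral (μ : Measure X) (f : X → ℝ) (p : ℝ≥0∞) {q : ℝ≥0∞}
    (hq₀ : q ≠ 0) (hq : q ≠ ∞) :
    lorentzNorm μ f p q ^ q.toReal = ∫⁻ t in Ioi 0,
      (ENNReal.ofReal t ^ (1 / p).toReal * rearr μ f t) ^ q.toReal / ENNReal.ofReal t := by
  rw [lorentzNorm, if_neg hq, ← ENNReal.rpow_mul,
    one_div_mul_cancel (ENNReal.toReal_ne_zero.2 ⟨hq₀, hq⟩), ENNReal.rpow_one]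

lemma ofReal_rpow_mul_rearr_le_lorentzNorm (μ : Measure X) (f : X → ℝ) {p q : ℝ≥0∞}
    (hp₀ : p ≠ 0) (hp : p ≠ ∞) (hq₀ : q ≠ 0) (hq : q ≠ ∞) {t : ℝ} (ht : 0 < t) :
    ENNReal.ofReal t ^ (1 / p).toReal * rearr μ f t ≤
      ENNReal.ofReal ((1 / p).toReal * q.toReal) ^ (1 / q.toReal) * lorentzNorm μ f p q := by
  set a := (1 / p).toReal
  set e := q.toReal
  set g := rearr μ f
  have ha : 0 < a := ENNReal.toReal_pos (by simp [hp]) (by simp [hp₀])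
  have he : 0 < e := ENNReal.toReal_pos hq₀ hq
  have hc : 0 < a * e := mul_pos ha he
  have hpow : (ENNReal.ofReal t ^ a * g t) ^ e ≤
      ENNReal.ofReal (a * e) * lorentzNorm μ f p q ^ e := by
    rw [lorentzNorm_rpow_eq_lintegral μ f p hq₀ hq]
    calc (ENNReal.ofReal t ^ a * g t) ^ e
        = ENNReal.ofReal (a * e) * (g t ^ e * ENNReal.ofReal (t ^ (a * e) / (a * e))) := by
          rw [mul_left_comm, ← ENNReal.ofReal_mul hc.le, mul_div_cancel₀ _ hc.ne',
            ENNReal.mul_rpow_of_nonneg _ _ he.le, ← ENNReal.rpow_mul,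
            ENNReal.ofReal_rpow_of_pos ht, mul_comm]
      _ = ENNReal.ofReal (a * e) *
            ∫⁻ s in Ioo 0 t, (ENNReal.ofReal s ^ a * g t) ^ e / ENNReal.ofReal s := by
          rw [← lintegral_Ioo_ofReal_rpow_sub_one hc ht, ← lintegral_const_mul _ (by fun_prop)]
          congr 1
          refine setLIntegral_congr_fun measurableSet_Ioo fun s hs => ?_
          have hs₀ : ENNReal.ofReal s ≠ 0 := by simpa using hs.1
          rw [ENNReal.mul_rpow_of_nonneg _ _ he.le, ← ENNReal.rpow_mul,
            ENNReal.rpow_sub _ _ hs₀ ofReal_ne_top, ENNReal.rpow_one,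
            mul_comm (g t ^ e), ENNReal.mul_div_right_comm]
      _ ≤ ENNReal.ofReal (a * e) *
            ∫⁻ s in Ioi 0, (ENNReal.ofReal s ^ a * g s) ^ e / ENNReal.ofReal s := by
          gcongr ENNReal.ofReal (a * e) * ?_
          calc _ ≤ ∫⁻ s in Ioo 0 t, (ENNReal.ofReal s ^ a * g s) ^ e / ENNReal.ofReal s :=
                setLIntegral_mono' measurableSet_Ioo fun s hs => by
                  gcongr
                  exact rearr_antitone μ f hs.2.le
            _ ≤ _ := lintegral_mono_set Ioo_subset_Ioi_self
  calc ENNReal.ofReal t ^ a * g t = ((ENNReal.ofReal t ^ a * g t) ^ e) ^ (1 / e) := by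
        rw [← ENNReal.rpow_mul, mul_one_div_cancel he.ne', ENNReal.rpow_one]
    _ ≤ (ENNReal.ofReal (a * e) * lorentzNorm μ f p q ^ e) ^ (1 / e) := by gcongr
    _ = ENNReal.ofReal (a * e) ^ (1 / e) * lorentzNorm μ f p q := by
        rw [ENNReal.mul_rpow_of_nonneg _ _ (by positivity), ← ENNReal.rpow_mul,
          mul_one_div_cancel he.ne', ENNReal.rpow_one]

def lorentzEmbeddingConst (p q₀ : ℝ≥0∞) : ℝ≥0∞ :=
  max 1 (ENNReal.ofReal ((1 / p).toReal * q₀.toReal) ^ (1 / q₀.toReal))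

lemma one_le_lorentzEmbeddingConst (p q₀ : ℝ≥0∞) : 1 ≤ lorentzEmbeddingConst p q₀ :=
  le_max_left _ _

lemma lorentzEmbeddingConst_ne_top (p q₀ : ℝ≥0∞) : lorentzEmbeddingConst p q₀ ≠ ∞ :=
  max_ne_top one_ne_top (ENNReal.rpow_ne_top_of_nonneg (by positivity) ofReal_ne_top)

lemma lorentzEmbeddingConst_le_of_le {p p' : ℝ≥0∞} (hp : p ≠ 0) (hpp' : p ≤ p') (q₀ : ℝ≥0∞) :
    lorentzEmbeddingConst p' q₀ ≤ lorentzEmbeddingConst p q₀ := by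
  unfold lorentzEmbeddingConst
  gcongr
  simpa using hp

theorem lorentzNorm_le_of_le (μ : Measure X) (f : X → ℝ) {p q₀ q : ℝ≥0∞}
    (hp₀ : p ≠ 0) (hp : p ≠ ∞) (hq₀ : q₀ ≠ 0) (hq₀q : q₀ ≤ q) :
    lorentzNorm μ f p q ≤ lorentzEmbeddingConst p q₀ * lorentzNorm μ f p q₀ := by
  rcases eq_or_ne q₀ ∞ with rfl | hq₀'
  · rw [top_le_iff.1 hq₀q]
    exact le_mul_of_one_le_left' (one_le_lorentzEmbeddingConst p ∞)
  set M := lorentzEmbeddingConst p q₀ * lorentzNorm μ f p q₀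
  have hweak : ∀ t ∈ Ioi (0 : ℝ), ENNReal.ofReal t ^ (1 / p).toReal * rearr μ f t ≤ M :=
    fun t ht => (ofReal_rpow_mul_rearr_le_lorentzNorm μ f hp₀ hp hq₀ hq₀' ht).trans
      (mul_le_mul_left (le_max_right _ _) _)
  rcases eq_or_ne q ∞ with rfl | hq
  · rw [lorentzNorm, if_pos rfl]
    exact iSup₂_le hweak
  set e := q₀.toReal
  set r := q.toReal
  have he : 0 < e := ENNReal.toReal_pos hq₀ hq₀'
  have her : e ≤ r := ENNReal.toReal_mono hq hq₀q
  have hr : 0 < r := he.trans_le her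
  have hN : lorentzNorm μ f p q₀ ≤ M := le_mul_of_one_le_left' (one_le_lorentzEmbeddingConst p q₀)
  have hg : Measurable (rearr μ f) := (rearr_antitone μ f).measurable
  rw [← ENNReal.rpow_le_rpow_iff hr,
    lorentzNorm_rpow_eq_lintegral μ f p (ne_bot_of_le_ne_bot hq₀ hq₀q) hq]
  calc ∫⁻ t in Ioi 0,
          (ENNReal.ofReal t ^ (1 / p).toReal * rearr μ f t) ^ r / ENNReal.ofReal t
      ≤ ∫⁻ t in Ioi 0, M ^ (r - e) *
          ((ENNReal.ofReal t ^ (1 / p).toReal * rearr μ f t) ^ e / ENNReal.ofReal t) := by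
        refine setLIntegral_mono' measurableSet_Ioi fun t ht => ?_
        rw [← mul_div_assoc, ← sub_add_cancel r e,
          ENNReal.rpow_add_of_nonneg _ _ (sub_nonneg.2 her) he.le, sub_add_cancel]
        gcongr
        exact hweak t ht
    _ = M ^ (r - e) * lorentzNorm μ f p q₀ ^ e := by
        rw [lintegral_const_mul _ (by fun_prop), lorentzNorm_rpow_eq_lintegral μ f p hq₀ hq₀']
    _ ≤ M ^ (r - e) * M ^ e := by gcongr
    _ = M ^ r := by
        rw [← ENNReal.rpow_add_of_nonneg _ _ (sub_nonneg.2 her) he.le, sub_add_cancel]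

theorem stmt15_general (μ : Measure X) (J Q : Set ℝ≥0∞)
    (hJ : J ⊆ Ioo 0 ∞)
    (hmJ : 0 < sInf J) (hmQ : 0 < sInf Q) (hmQQ : sInf Q ∈ Q) :
    ILJQ μ J Q =
      {f : X → ℝ | (∀ p ∈ J, ∀ q ∈ Q, f ∈ Lorentz μ p q) ∧
          ∀ q ∈ Q, (⨆ p ∈ J, lorentzNorm μ f p q) < ∞} ∩
      {f : X → ℝ | (∀ p ∈ J, ∀ q ∈ Q, f ∈ Lorentz μ p q) ∧
          ∀ p ∈ J, (⨆ q ∈ Q, lorentzNorm μ f p q) < ∞} := by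
  ext f
  refine ⟨fun ⟨hf, hsup⟩ => ⟨⟨hf, fun q hq => ?_⟩, ⟨hf, fun p hp => ?_⟩⟩,
    fun ⟨⟨hf, hA⟩, _⟩ => ⟨hf, ?_⟩⟩
  · refine lt_of_le_of_lt (iSup₂_le fun p hp => ?_) hsup
    exact le_iSup₂_of_le (f := fun p _ => ⨆ q ∈ Q, lorentzNorm μ f p q) p hp
      (le_iSup₂ (f := fun q _ => lorentzNorm μ f p q) q hq)
  · exact (le_iSup₂ (f := fun p _ => ⨆ q ∈ Q, lorentzNorm μ f p q) p hp).trans_lt hsup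
  · calc ⨆ p ∈ J, ⨆ q ∈ Q, lorentzNorm μ f p q
        ≤ lorentzEmbeddingConst (sInf J) (sInf Q) * ⨆ p ∈ J, lorentzNorm μ f p (sInf Q) :=
          iSup₂_le fun p hp => iSup₂_le fun q hq =>
            (lorentzNorm_le_of_le μ f (hJ hp).1.ne' (hJ hp).2.ne hmQ.ne' (sInf_le hq)).trans
              (mul_le_mul' (lorentzEmbeddingConst_le_of_le hmJ.ne' (sInf_le hp) _)
                (le_iSup₂ (f := fun p _ => lorentzNorm μ f p (sInf Q)) p hp))
      _ < ∞ := mul_lt_top (lorentzEmbeddingConst_ne_top _ _).lt_top (hA _ hmQQ)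

/-- If `m_Q ∈ Q`, then `IL_{J,Q} = A ∩ B` where `A` (resp. `B`) consists of the
functions whose norms are uniformly bounded in `p ∈ J` for each fixed `q ∈ Q`
(resp. uniformly bounded in `q ∈ Q` for each fixed `p ∈ J`). -/
theorem stmt15 (μ : Measure X) (J Q : Set ℝ≥0∞)
    (hJ : J ⊆ Ioo 0 ∞) (hQ : Q ⊆ Ioo 0 ∞)
    (hmJ : 0 < sInf J) (hmQ : 0 < sInf Q) (hmQQ : sInf Q ∈ Q) :
    ILJQ μ J Q =
      {f : X → ℝ | (∀ p ∈ J, ∀ q ∈ Q, f ∈ Lorentz μ p q) ∧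
          ∀ q ∈ Q, (⨆ p ∈ J, lorentzNorm μ f p q) < ∞} ∩
      {f : X → ℝ | (∀ p ∈ J, ∀ q ∈ Q, f ∈ Lorentz μ p q) ∧
          ∀ p ∈ J, (⨆ q ∈ Q, lorentzNorm μ f p q) < ∞} :=
  stmt15_general μ J Q hJ hmJ hmQ hmQQ
end
end

section
/- Let J,Q ⊆ [1,∞) be nonempty sets with m_J = inf J and m_Q = inf Q. Then IL_{J,Q} = ℓ_{m_J,m_Q}, where IL_{J,Q} = {(x_i) ∈ ⋂_{p∈J,q∈Q} ℓ_{p,q} : sup_{p∈J,q∈Q} ‖(x_i)‖_{p,q} < ∞}. -/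
/-!
Let `a` be the decreasing rearrangement of `|x|`, so that `‖x‖_{p,q}^q = ∑ (k+1)^{q/p-1} a_k^q`.
From `(k+1)^α ≤ max(1,α) ∑_{i≤k} (i+1)^{α-1}` and the monotonicity of `a` one gets the weak-type
bound `(k+1)^{1/p} a_k ≤ C ‖x‖_{p,r}`; splitting `a_k^q = a_k^r a_k^{q-r}` then gives
`‖x‖_{p,q} ≤ C ‖x‖_{p,r}` for all `q ≥ r`, with `C` depending only on `r/p`. As `‖x‖_{p,q}` also
decreases in `p`, every norm in the supremum defining `IL_{J,Q}` is at most `C ‖x‖_{m_J,m_Q}`.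
Conversely, along `p_n ∈ J`, `q_n ∈ Q` tending to `m_J`, `m_Q` the series for `(p_n, q_n)`
converge termwise to the one for `(m_J, m_Q)`, so Fatou's lemma bounds `‖x‖_{m_J,m_Q}` by that
supremum.
-/

open Set ENNReal Filter

noncomputable section

/-- The non-increasing rearrangement of `(|x i|)`, 0-indexed: the `k`-th value is
`inf {s > 0 : #{j : |x j| > s} ≤ k}`, with `inf ∅ = ∞`. -/
def seqRearr (x : ℕ → ℝ) (k : ℕ) : ℝ≥0∞ :=
  ⨅ (s : ℝ) (_ : 0 < s ∧ MeasureTheory.Measure.count {j : ℕ | s < |x j|} ≤ (k : ℝ≥0∞)),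
    ENNReal.ofReal s

/-- The Lorentz sequence quasi-norm `‖x‖_{p,q}`; the `i`-th (1-based) term of the
non-increasing rearrangement is `seqRearr x (i - 1)`, i.e. `seqRearr x k` with `i = k + 1`. -/
def seqLorentzNorm (x : ℕ → ℝ) (p q : ℝ≥0∞) : ℝ≥0∞ :=
  if q = ∞ then ⨆ k : ℕ, ((k : ℝ≥0∞) + 1) ^ (1 / p).toReal * seqRearr x k
  else (∑' k : ℕ, ((k : ℝ≥0∞) + 1) ^ ((q / p).toReal - 1) * seqRearr x k ^ q.toReal) ^
    (1 / q.toReal)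

/-- The Lorentz sequence space `ℓ_{p,q}`: null sequences with finite Lorentz quasi-norm. -/
def seqLorentz (p q : ℝ≥0∞) : Set (ℕ → ℝ) :=
  {x | Tendsto x atTop (nhds 0) ∧ seqLorentzNorm x p q < ∞}

open scoped Topology NNReal

lemma rpow_add_one_sub_rpow_le {α t : ℝ} (hα : 1 ≤ α) (ht : 0 ≤ t) :
    (t + 1) ^ α - t ^ α ≤ α * (t + 1) ^ (α - 1) := by
  have hb : 0 < t + 1 := by linarith
  have hs : -1 ≤ -(t + 1)⁻¹ := neg_le_neg (inv_le_one_of_one_le₀ (by linarith))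
  have hber := one_add_mul_self_le_rpow_one_add hs hα
  rw [show 1 + -(t + 1)⁻¹ = t / (t + 1) by field_simp; ring, Real.div_rpow ht hb.le,
    le_div_iff₀ (Real.rpow_pos_of_pos hb α)] at hber
  rw [Real.rpow_sub_one hb.ne']
  have : α * ((t + 1) ^ α / (t + 1)) = α * (t + 1)⁻¹ * (t + 1) ^ α := by ring
  linarith

lemma rpow_add_one_le_mul_sum (α : ℝ) (k : ℕ) :
    ((k : ℝ) + 1) ^ α ≤ max 1 α * ∑ i ∈ Finset.range (k + 1), ((i : ℝ) + 1) ^ (α - 1) := by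
  rcases le_total α 1 with hα | hα
  · have hterm : ∀ i ∈ Finset.range (k + 1), ((k : ℝ) + 1) ^ (α - 1) ≤ ((i : ℝ) + 1) ^ (α - 1) := by
      intro i hi
      have hik : (i : ℝ) ≤ k := by exact_mod_cast Nat.lt_succ_iff.1 (Finset.mem_range.1 hi)
      exact Real.rpow_le_rpow_of_nonpos (by positivity) (by linarith) (by linarith)
    calc ((k : ℝ) + 1) ^ α = ∑ _i ∈ Finset.range (k + 1), ((k : ℝ) + 1) ^ (α - 1) := by
          rw [Finset.sum_const, Finset.card_range, nsmul_eq_mul, Real.rpow_sub_one (by positivity)]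
          push_cast
          field_simp
      _ ≤ _ := Finset.sum_le_sum hterm
      _ = _ := by rw [max_eq_left hα, one_mul]
  · calc ((k : ℝ) + 1) ^ α = ∑ i ∈ Finset.range (k + 1), (((i : ℝ) + 1) ^ α - (i : ℝ) ^ α) := by
          have h := Finset.sum_range_sub (fun i : ℕ => (i : ℝ) ^ α) (k + 1)
          push_cast at h
          rw [h, Real.zero_rpow (by linarith), sub_zero]
      _ ≤ ∑ i ∈ Finset.range (k + 1), α * ((i : ℝ) + 1) ^ (α - 1) :=
          Finset.sum_le_sum fun i _ => rpow_add_one_sub_rpow_le hα i.cast_nonneg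
      _ = _ := by rw [max_eq_right hα, Finset.mul_sum]

lemma ENNReal.rpow_natCast_add_one_le_mul_sum (α : ℝ) (k : ℕ) :
    ((k : ℝ≥0∞) + 1) ^ α
      ≤ ENNReal.ofReal (max 1 α) * ∑ i ∈ Finset.range (k + 1), ((i : ℝ≥0∞) + 1) ^ (α - 1) := by
  have hcast : ∀ (i : ℕ) (β : ℝ), ((i : ℝ≥0∞) + 1) ^ β = ENNReal.ofReal (((i : ℝ) + 1) ^ β) := by
    intro i β
    rw [← ENNReal.ofReal_rpow_of_pos (by positivity), ENNReal.ofReal_add (by positivity) zero_le_one,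
      ENNReal.ofReal_natCast, ENNReal.ofReal_one]
  simp only [hcast]
  rw [← ENNReal.ofReal_sum_of_nonneg fun i _ => by positivity,
    ← ENNReal.ofReal_mul (by positivity)]
  exact ENNReal.ofReal_le_ofReal (rpow_add_one_le_mul_sum α k)

lemma ENNReal.tendsto_const_rpow {α : Type*} {l : Filter α} {e : α → ℝ} {y : ℝ} {b : ℝ≥0∞}
    (he : Tendsto e l (𝓝 y)) (hb : b ≠ ∞) (h : b ≠ 0 ∨ 0 < y) :
    Tendsto (fun n => b ^ e n) l (𝓝 (b ^ y)) := by
  lift b to ℝ≥0 using hb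
  have hcoe : ∀ z : ℝ, (b ≠ 0 ∨ 0 < z) → (b : ℝ≥0∞) ^ z = ↑(b ^ z) := by
    rintro z (hb0 | hz)
    · exact (ENNReal.coe_rpow_of_ne_zero hb0 z).symm
    · exact (ENNReal.coe_rpow_of_nonneg b hz.le).symm
  have h' : b ≠ 0 ∨ 0 < y := by simpa using h
  have hev : ∀ᶠ n in l, (b : ℝ≥0∞) ^ e n = ↑(b ^ e n) := by
    rcases h' with hb0 | hy
    · exact Eventually.of_forall fun n => hcoe _ (Or.inl hb0)
    · exact (he.eventually (lt_mem_nhds hy)).mono fun n hn => hcoe _ (Or.inr hn)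
  rw [hcoe y h']
  exact (ENNReal.tendsto_coe.2 (tendsto_const_nhds.nnrpow he h')).congr' (hev.mono fun _ h => h.symm)

lemma ENNReal.tsum_liminf_le_liminf_tsum {ι : Type*} [Countable ι] (f : ℕ → ι → ℝ≥0∞) :
    ∑' k, liminf (fun n => f n k) atTop ≤ liminf (fun n => ∑' k, f n k) atTop := by
  let _ : MeasurableSpace ι := ⊤
  have := MeasureTheory.lintegral_liminf_le (μ := MeasureTheory.Measure.count) (u := atTop)
    fun n => measurable_of_countable (f n)
  simpa only [MeasureTheory.lintegral_count] using this

section Lorentz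

variable {x : ℕ → ℝ} {p q r : ℝ≥0∞}

lemma seqRearr_antitone (x : ℕ → ℝ) : Antitone (seqRearr x) :=
  fun _ _ hkl => le_iInf₂ fun s hs =>
    iInf₂_le s ⟨hs.1, hs.2.trans (Nat.cast_le.2 hkl)⟩

lemma seqRearr_lt_top (hx : Tendsto x atTop (𝓝 0)) (k : ℕ) : seqRearr x k < ∞ := by
  obtain ⟨M, hM⟩ : BddAbove (range fun j => |x j|) := by
    simpa using hx.abs.bddAbove_range
  refine (iInf₂_le (M + 1) ⟨?_, ?_⟩).trans_lt ofReal_lt_top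
  · linarith [(abs_nonneg (x 0)).trans (hM ⟨0, rfl⟩)]
  · have : {j : ℕ | M + 1 < |x j|} = ∅ :=
      eq_empty_of_forall_notMem fun j hj => by linarith [hM ⟨j, rfl⟩, hj.out]
    simp [this]

/-- The `q`-th power of `‖x‖_{p,q}` for finite `q`. -/
def seqLorentzSum (x : ℕ → ℝ) (p q : ℝ≥0∞) : ℝ≥0∞ :=
  ∑' k : ℕ, ((k : ℝ≥0∞) + 1) ^ ((q / p).toReal - 1) * seqRearr x k ^ q.toReal

lemma seqLorentzNorm_of_ne_top (hq : q ≠ ∞) :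
    seqLorentzNorm x p q = seqLorentzSum x p q ^ (1 / q.toReal) := by
  rw [seqLorentzNorm, if_neg hq, seqLorentzSum]

lemma seqLorentzSum_eq (hq0 : q ≠ 0) (hq : q ≠ ∞) :
    seqLorentzSum x p q = seqLorentzNorm x p q ^ q.toReal := by
  rw [seqLorentzNorm_of_ne_top hq, ← ENNReal.rpow_mul,
    one_div_mul_cancel (ENNReal.toReal_pos hq0 hq).ne', ENNReal.rpow_one]

lemma seqLorentzNorm_lt_top_iff (hq0 : q ≠ 0) (hq : q ≠ ∞) :
    seqLorentzNorm x p q < ∞ ↔ seqLorentzSum x p q < ∞ := by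
  rw [seqLorentzNorm_of_ne_top hq]
  exact ENNReal.rpow_lt_top_iff_of_pos (by simpa using ENNReal.toReal_pos hq0 hq)

lemma seqLorentzNorm_top_eq (x : ℕ → ℝ) (p : ℝ≥0∞) :
    seqLorentzNorm x p ∞ = ⨆ k : ℕ, ((k : ℝ≥0∞) + 1) ^ (1 / p.toReal) * seqRearr x k := by
  simp [seqLorentzNorm, ENNReal.toReal_inv]

lemma seqLorentzNorm_anti_left (hp : p ≠ 0) (hpr : p ≤ r) :
    seqLorentzNorm x r q ≤ seqLorentzNorm x p q := by
  have hk : ∀ k : ℕ, (1 : ℝ≥0∞) ≤ (k : ℝ≥0∞) + 1 := fun _ => le_add_self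
  have hdiv : ∀ a : ℝ≥0∞, a ≠ ∞ → (a / r).toReal ≤ (a / p).toReal := fun a ha =>
    ENNReal.toReal_mono (ENNReal.div_ne_top ha hp) (ENNReal.div_le_div_left hpr a)
  unfold seqLorentzNorm
  split_ifs with hq
  · exact iSup_mono fun k =>
      mul_le_mul_left (ENNReal.rpow_le_rpow_of_exponent_le (hk k) (hdiv 1 one_ne_top)) _
  · refine ENNReal.rpow_le_rpow (ENNReal.tsum_le_tsum fun k => ?_) (by positivity)
    exact mul_le_mul_left (ENNReal.rpow_le_rpow_of_exponent_le (hk k)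
      (sub_le_sub_right (hdiv q hq) 1)) _

end Lorentz

section Embedding

variable {x : ℕ → ℝ} {p q r : ℝ≥0∞}

lemma seqLorentzNorm_top_le (hr0 : r ≠ 0) (hr : r ≠ ∞) :
    seqLorentzNorm x p ∞ ≤
      ENNReal.ofReal (max 1 (r / p).toReal) ^ (1 / r.toReal) * seqLorentzNorm x p r := by
  set a := seqRearr x
  set c := ENNReal.ofReal (max 1 (r / p).toReal)
  set α := (r / p).toReal with hα
  set R := r.toReal
  have hR : 0 < R := ENNReal.toReal_pos hr0 hr
  rw [seqLorentzNorm_top_eq, seqLorentzNorm_of_ne_top hr,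
    ← ENNReal.mul_rpow_of_nonneg _ _ (by positivity)]
  refine iSup_le fun k => ?_
  have hpow : a k ^ R * ((k : ℝ≥0∞) + 1) ^ α ≤ c * seqLorentzSum x p r :=
    calc a k ^ R * ((k : ℝ≥0∞) + 1) ^ α
        ≤ a k ^ R * (c * ∑ i ∈ Finset.range (k + 1), ((i : ℝ≥0∞) + 1) ^ (α - 1)) := by
          gcongr; exact ENNReal.rpow_natCast_add_one_le_mul_sum α k
      _ = c * ∑ i ∈ Finset.range (k + 1), a k ^ R * ((i : ℝ≥0∞) + 1) ^ (α - 1) := by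
          rw [mul_left_comm, Finset.mul_sum]
      _ ≤ c * ∑ i ∈ Finset.range (k + 1), ((i : ℝ≥0∞) + 1) ^ (α - 1) * a i ^ R := by
          gcongr c * ?_
          refine Finset.sum_le_sum fun i hi => ?_
          rw [mul_comm]
          gcongr
          exact seqRearr_antitone x (Nat.lt_succ_iff.1 (Finset.mem_range.1 hi))
      _ ≤ c * seqLorentzSum x p r := by gcongr; exact ENNReal.sum_le_tsum _
  have hexp : α * (1 / R) = 1 / p.toReal := by
    rw [hα, ENNReal.toReal_div, div_mul_div_comm, mul_one, mul_comm, ← div_div,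
      div_self hR.ne']
  calc ((k : ℝ≥0∞) + 1) ^ (1 / p.toReal) * a k
      = (a k ^ R * ((k : ℝ≥0∞) + 1) ^ α) ^ (1 / R) := by
        rw [ENNReal.mul_rpow_of_nonneg _ _ (by positivity), ← ENNReal.rpow_mul,
          ← ENNReal.rpow_mul, mul_one_div_cancel hR.ne', ENNReal.rpow_one, hexp, mul_comm]
    _ ≤ _ := by gcongr

lemma seqLorentzSum_le_mul_rpow (hrq : r ≤ q) (hq : q ≠ ∞) :
    seqLorentzSum x p q ≤
      seqLorentzSum x p r * seqLorentzNorm x p ∞ ^ (q.toReal - r.toReal) := by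
  set a := seqRearr x
  set P := p.toReal
  set R := r.toReal
  set Q := q.toReal
  have hRQ : 0 ≤ Q - R := sub_nonneg.2 (ENNReal.toReal_mono hq hrq)
  rw [seqLorentzSum, seqLorentzSum, ← ENNReal.tsum_mul_right]
  refine ENNReal.tsum_le_tsum fun k => ?_
  have hk0 : (k : ℝ≥0∞) + 1 ≠ 0 := by simp
  have hkt : (k : ℝ≥0∞) + 1 ≠ ∞ := by simp
  have hweak : ((k : ℝ≥0∞) + 1) ^ (1 / P) * a k ≤ seqLorentzNorm x p ∞ := by
    rw [seqLorentzNorm_top_eq]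
    exact le_iSup (fun k : ℕ => ((k : ℝ≥0∞) + 1) ^ (1 / P) * a k) k
  calc ((k : ℝ≥0∞) + 1) ^ ((q / p).toReal - 1) * a k ^ Q
      = ((k : ℝ≥0∞) + 1) ^ ((r / p).toReal - 1) * a k ^ R
          * (((k : ℝ≥0∞) + 1) ^ (1 / P) * a k) ^ (Q - R) := by
        have e : Q / P - 1 = (R / P - 1) + 1 / P * (Q - R) := by ring
        rw [ENNReal.mul_rpow_of_nonneg _ _ hRQ, ← ENNReal.rpow_mul, ENNReal.toReal_div,
          ENNReal.toReal_div, e, ENNReal.rpow_add _ _ hk0 hkt,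
          show a k ^ Q = a k ^ R * a k ^ (Q - R) by
            rw [← ENNReal.rpow_add_of_nonneg _ _ ENNReal.toReal_nonneg hRQ, add_sub_cancel]]
        ring
    _ ≤ _ := by gcongr

lemma seqLorentzNorm_le_mul (hr0 : r ≠ 0) (hrq : r ≤ q) (hq : q ≠ ∞) :
    seqLorentzNorm x p q ≤
      ENNReal.ofReal (max 1 (r / p).toReal) ^ (1 / r.toReal) * seqLorentzNorm x p r := by
  set C := ENNReal.ofReal (max 1 (r / p).toReal) ^ (1 / r.toReal)
  set N := seqLorentzNorm x p r
  set R := r.toReal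
  set Q := q.toReal
  have hr : r ≠ ∞ := ne_top_of_le_ne_top hq hrq
  have hR : 0 < R := ENNReal.toReal_pos hr0 hr
  have hRQ : R ≤ Q := ENNReal.toReal_mono hq hrq
  have hQ : 0 < Q := hR.trans_le hRQ
  have hC : 1 ≤ C := ENNReal.one_le_rpow (by simp) (by positivity)
  have hsum : seqLorentzSum x p q ≤ N ^ R * (C * N) ^ (Q - R) := by
    refine (seqLorentzSum_le_mul_rpow hrq hq).trans ?_
    rw [seqLorentzSum_eq hr0 hr]
    gcongr
    exact seqLorentzNorm_top_le hr0 hr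
  clear_value C N
  calc seqLorentzNorm x p q = seqLorentzSum x p q ^ (1 / Q) := seqLorentzNorm_of_ne_top hq
    _ ≤ (N ^ R * (C * N) ^ (Q - R)) ^ (1 / Q) := by gcongr
    _ = C ^ ((Q - R) / Q) * N := by
        rw [ENNReal.mul_rpow_of_nonneg C N (by linarith), mul_left_comm,
          ← ENNReal.rpow_add_of_nonneg _ _ hR.le (by linarith), add_sub_cancel,
          ENNReal.mul_rpow_of_nonneg _ _ (by positivity), ← ENNReal.rpow_mul, ← ENNReal.rpow_mul,
          mul_one_div_cancel hQ.ne', ENNReal.rpow_one, mul_one_div]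
    _ ≤ C * N := by
        gcongr
        calc C ^ ((Q - R) / Q) ≤ C ^ (1 : ℝ) :=
              ENNReal.rpow_le_rpow_of_exponent_le hC
                ((div_le_one hQ).2 (by linarith))
          _ = C := ENNReal.rpow_one C

end Embedding

section Semicontinuity

variable {x : ℕ → ℝ} {p q : ℝ≥0∞} {pn qn : ℕ → ℝ≥0∞}

lemma seqLorentzSum_le_liminf (hx : Tendsto x atTop (𝓝 0)) (hp : p ≠ 0) (hq0 : q ≠ 0)
    (hq : q ≠ ∞) (hpn : Tendsto pn atTop (𝓝 p)) (hqn : Tendsto qn atTop (𝓝 q)) :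
    seqLorentzSum x p q ≤ liminf (fun n => seqLorentzSum x (pn n) (qn n)) atTop := by
  have hQ : Tendsto (fun n => (qn n).toReal) atTop (𝓝 q.toReal) :=
    (ENNReal.tendsto_toReal hq).comp hqn
  have hQ0 : 0 < q.toReal := ENNReal.toReal_pos hq0 hq
  have hexp : Tendsto (fun n => (qn n / pn n).toReal - 1) atTop (𝓝 ((q / p).toReal - 1)) :=
    ((ENNReal.tendsto_toReal (ENNReal.div_ne_top hq hp)).comp
      (ENNReal.Tendsto.div hqn (Or.inr hp) hpn (Or.inr hq))).sub_const 1
  have hterm : ∀ k : ℕ, Tendsto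
      (fun n => ((k : ℝ≥0∞) + 1) ^ ((qn n / pn n).toReal - 1) * seqRearr x k ^ (qn n).toReal)
      atTop (𝓝 (((k : ℝ≥0∞) + 1) ^ ((q / p).toReal - 1) * seqRearr x k ^ q.toReal)) :=
    fun k => ENNReal.Tendsto.mul (ENNReal.tendsto_const_rpow hexp (by simp) (Or.inl (by simp)))
      (Or.inr (ENNReal.rpow_ne_top_of_nonneg hQ0.le (seqRearr_lt_top hx k).ne))
      (ENNReal.tendsto_const_rpow hQ (seqRearr_lt_top hx k).ne (Or.inr hQ0))
      (Or.inr (ENNReal.rpow_ne_top_of_ne_zero (by simp) (by simp)))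
  calc seqLorentzSum x p q
      = ∑' k : ℕ, liminf (fun n => ((k : ℝ≥0∞) + 1) ^ ((qn n / pn n).toReal - 1)
          * seqRearr x k ^ (qn n).toReal) atTop :=
        tsum_congr fun k => (hterm k).liminf_eq.symm
    _ ≤ _ := ENNReal.tsum_liminf_le_liminf_tsum _

lemma seqLorentzNorm_le_of_tendsto {S : ℝ≥0∞} (hx : Tendsto x atTop (𝓝 0)) (hp : p ≠ 0)
    (hq0 : q ≠ 0) (hq : q ≠ ∞) (hpn : Tendsto pn atTop (𝓝 p)) (hqn : Tendsto qn atTop (𝓝 q))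
    (hS : ∀ n, seqLorentzNorm x (pn n) (qn n) ≤ S) :
    seqLorentzNorm x p q ≤ S := by
  rcases eq_or_ne S ∞ with rfl | hS_top
  · exact le_top
  have hQ0 : 0 < q.toReal := ENNReal.toReal_pos hq0 hq
  have hsum : seqLorentzSum x p q ≤ S ^ q.toReal :=
    calc seqLorentzSum x p q
        ≤ liminf (fun n => seqLorentzSum x (pn n) (qn n)) atTop :=
          seqLorentzSum_le_liminf hx hp hq0 hq hpn hqn
      _ ≤ liminf (fun n => S ^ (qn n).toReal) atTop := by
          refine liminf_le_liminf ?_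
          filter_upwards [hqn.eventually_ne hq0, hqn.eventually_ne hq] with n hn0 hn
          rw [seqLorentzSum_eq hn0 hn]
          gcongr
          exact hS n
      _ = S ^ q.toReal :=
          (ENNReal.tendsto_const_rpow ((ENNReal.tendsto_toReal hq).comp hqn) hS_top
            (Or.inr hQ0)).liminf_eq
  calc seqLorentzNorm x p q = seqLorentzSum x p q ^ (1 / q.toReal) := seqLorentzNorm_of_ne_top hq
    _ ≤ (S ^ q.toReal) ^ (1 / q.toReal) := by gcongr
    _ = S := by rw [← ENNReal.rpow_mul, mul_one_div_cancel hQ0.ne', ENNReal.rpow_one]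

end Semicontinuity

/-- `IL_{J,Q} = ℓ_{m_J,m_Q}` for nonempty `J, Q ⊆ [1,∞)`. -/
theorem stmt16 (J Q : Set ℝ≥0∞) (hJne : J.Nonempty) (hQne : Q.Nonempty)
    (hJ : J ⊆ Ico 1 ∞) (hQ : Q ⊆ Ico 1 ∞) :
    {x : ℕ → ℝ | (∀ p ∈ J, ∀ q ∈ Q, x ∈ seqLorentz p q) ∧
        (⨆ p ∈ J, ⨆ q ∈ Q, seqLorentzNorm x p q) < ∞}
      = seqLorentz (sInf J) (sInf Q) := by
  obtain ⟨pn, -, hpn, hpnJ⟩ := exists_seq_tendsto_sInf hJne (OrderBot.bddBelow J)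
  obtain ⟨qn, -, hqn, hqnQ⟩ := exists_seq_tendsto_sInf hQne (OrderBot.bddBelow Q)
  have hJ0 : sInf J ≠ 0 := (zero_lt_one.trans_le (le_sInf fun p hp => (hJ hp).1)).ne'
  have hQ0 : sInf Q ≠ 0 := (zero_lt_one.trans_le (le_sInf fun q hq => (hQ hq).1)).ne'
  have hQt : sInf Q ≠ ∞ := ((sInf_le (hqnQ 0)).trans_lt (hQ (hqnQ 0)).2).ne
  ext x
  constructor
  · rintro ⟨hmem, hS⟩
    have hx := (hmem _ (hpnJ 0) _ (hqnQ 0)).1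
    refine ⟨hx, lt_of_le_of_lt ?_ hS⟩
    exact seqLorentzNorm_le_of_tendsto hx hJ0 hQ0 hQt hpn hqn fun n =>
      le_iSup₂_of_le _ (hpnJ n) (le_iSup₂_of_le _ (hqnQ n) le_rfl)
  · rintro ⟨hx, hN⟩
    set C := ENNReal.ofReal (max 1 (sInf Q / sInf J).toReal) ^ (1 / (sInf Q).toReal)
    have hbound : ∀ p ∈ J, ∀ q ∈ Q,
        seqLorentzNorm x p q ≤ C * seqLorentzNorm x (sInf J) (sInf Q) := fun p hp q hq =>
      (seqLorentzNorm_anti_left hJ0 (sInf_le hp)).trans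
        (seqLorentzNorm_le_mul hQ0 (sInf_le hq) (hQ hq).2.ne)
    have hfin : C * seqLorentzNorm x (sInf J) (sInf Q) < ∞ :=
      ENNReal.mul_lt_top (ENNReal.rpow_lt_top_of_nonneg (by positivity) ofReal_ne_top) hN
    exact ⟨fun p hp q hq => ⟨hx, (hbound p hp q hq).trans_lt hfin⟩,
      (iSup₂_le fun p hp => iSup₂_le fun q hq => hbound p hp q hq).trans_lt hfin⟩
end
end

section
/- Let 1 ≤ q < ∞ and J ⊆ [1,∞) nonempty with m_J = inf J. Then IL_{J,q} ⊆ ℓ_{m_J,q}, where IL_{J,q} = {(x_i) ∈ ⋂_{p∈J} ℓ_{p,q} : sup_{p∈J} ‖(x_i)‖_{p,q} < ∞}; moreover, for every (x_i) ∈ IL_{J,q}, ‖(x_i)‖_{m_J,q} ≤ sup_{p∈J} ‖(x_i)‖_{p,q}. -/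
open Set ENNReal Filter
open scoped Topology NNReal

noncomputable section

/-! For `q < ∞` the weight `(k+1)^(q/p - 1)` decreases in `p` and depends continuously on
`p > 0`. Along a sequence in `J` decreasing to `m_J` the summands defining `‖x‖_{p,q}^q`
therefore increase to those of `‖x‖_{m_J,q}^q`, and monotone convergence for series in `ℝ≥0∞`
gives `‖x‖_{m_J,q} = sup_n ‖x‖_{p_n,q}`. -/

theorem ENNReal.tsum_iSup_of_monotone {α ι : Type*} [Preorder ι] [IsDirectedOrder ι]
    {f : α → ι → ℝ≥0∞} (hf : ∀ a, Monotone (f a)) :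
    ∑' a, ⨆ i, f a i = ⨆ i, ∑' a, f a i := by
  simp_rw [ENNReal.tsum_eq_iSup_sum, ENNReal.finsetSum_iSup_of_monotone hf]
  exact iSup_comm

theorem ENNReal.iSup_rpow_of_nonneg {ι : Sort*} [Nonempty ι] {f : ι → ℝ≥0∞} {z : ℝ}
    (hz : 0 ≤ z) : (⨆ i, f i) ^ z = ⨆ i, f i ^ z :=
  (ENNReal.monotone_rpow_of_nonneg hz).map_ciSup_of_continuousAt
    ENNReal.continuous_rpow_const.continuousAt

theorem ENNReal.Tendsto.const_rpow {α : Type*} {l : Filter α} {a : ℝ≥0∞} (ha : a ≠ 0)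
    (ha' : a ≠ ∞) {r : α → ℝ} {y : ℝ} (hr : Tendsto r l (𝓝 y)) :
    Tendsto (fun i => a ^ r i) l (𝓝 (a ^ y)) := by
  lift a to ℝ≥0 using ha'
  have ha₀ : a ≠ 0 := by exact_mod_cast ha
  simp_rw [← ENNReal.coe_rpow_of_ne_zero ha₀]
  exact ENNReal.tendsto_coe.2 (tendsto_const_nhds.nnrpow hr (Or.inl ha₀))

theorem seqLorentzNorm_of_ne_top_s18 {q : ℝ≥0∞} (hq : q ≠ ∞) (x : ℕ → ℝ) (p : ℝ≥0∞) :
    seqLorentzNorm x p q =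
      (∑' k : ℕ, ((k : ℝ≥0∞) + 1) ^ ((q / p).toReal - 1) * seqRearr x k ^ q.toReal) ^
        (1 / q.toReal) :=
  if_neg hq


theorem seqLorentzNorm_eq_iSup_of_antitone {q : ℝ≥0∞} (hq : q ≠ ∞) (x : ℕ → ℝ)
    {u : ℕ → ℝ≥0∞} {p : ℝ≥0∞} (hu : Antitone u) (hlim : Tendsto u atTop (𝓝 p)) (hp : p ≠ 0) :
    seqLorentzNorm x p q = ⨆ n, seqLorentzNorm x (u n) q := by
  have hdiv : ∀ {r : ℝ≥0∞}, p ≤ r → q / r ≠ ∞ := fun hr =>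
    ENNReal.div_ne_top hq ((pos_iff_ne_zero.2 hp).trans_le hr).ne'
  have hmono : ∀ k : ℕ,
      Monotone fun n => ((k : ℝ≥0∞) + 1) ^ ((q / u n).toReal - 1) * seqRearr x k ^ q.toReal := by
    intro k a b hab
    dsimp only
    gcongr
    · exact le_add_self
    · exact hdiv (hu.le_of_tendsto hlim b)
    · exact hu hab
  have hterm : ∀ k : ℕ, ((k : ℝ≥0∞) + 1) ^ ((q / p).toReal - 1) * seqRearr x k ^ q.toReal =
      ⨆ n, ((k : ℝ≥0∞) + 1) ^ ((q / u n).toReal - 1) * seqRearr x k ^ q.toReal := by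
    intro k
    refine (iSup_eq_of_tendsto (hmono k) (ENNReal.Tendsto.mul_const ?_ (Or.inl ?_))).symm
    · exact ENNReal.Tendsto.const_rpow (by positivity) (by simp)
        (((ENNReal.tendsto_toReal (hdiv le_rfl)).comp
          (ENNReal.Tendsto.const_div hlim (Or.inr hq))).sub_const 1)
    · exact (ENNReal.rpow_pos (by positivity) (by simp)).ne'
  simp_rw [seqLorentzNorm_of_ne_top_s18 hq, hterm]
  rw [ENNReal.tsum_iSup_of_monotone hmono, ENNReal.iSup_rpow_of_nonneg (by positivity)]

theorem seqLorentzNorm_sInf_le_iSup {q : ℝ≥0∞} (hq : q ≠ ∞) (x : ℕ → ℝ) {J : Set ℝ≥0∞}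
    (hJne : J.Nonempty) (hJ : sInf J ≠ 0) :
    seqLorentzNorm x (sInf J) q ≤ ⨆ p ∈ J, seqLorentzNorm x p q := by
  obtain ⟨u, hu, hlim, huJ⟩ := exists_seq_tendsto_sInf hJne (OrderBot.bddBelow J)
  rw [seqLorentzNorm_eq_iSup_of_antitone hq x hu hlim hJ]
  exact iSup_le fun n => le_iSup₂ (f := fun p _ => seqLorentzNorm x p q) (u n) (huJ n)

theorem stmt18_general (q : ℝ≥0∞) (hq : q ≠ ∞)
    (J : Set ℝ≥0∞) (hJne : J.Nonempty) (hJ : J ⊆ Ico 1 ∞) :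
    {x : ℕ → ℝ | (∀ p ∈ J, x ∈ seqLorentz p q) ∧
        (⨆ p ∈ J, seqLorentzNorm x p q) < ∞}
      ⊆ seqLorentz (sInf J) q ∧
    ∀ x ∈ {x : ℕ → ℝ | (∀ p ∈ J, x ∈ seqLorentz p q) ∧
        (⨆ p ∈ J, seqLorentzNorm x p q) < ∞},
      seqLorentzNorm x (sInf J) q ≤ ⨆ p ∈ J, seqLorentzNorm x p q := by
  have hJ₀ : sInf J ≠ 0 := (zero_lt_one.trans_le (le_sInf fun p hp => (hJ hp).1)).ne'
  have key := fun x => seqLorentzNorm_sInf_le_iSup hq x hJne hJ₀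
  obtain ⟨p₀, hp₀⟩ := hJne
  exact ⟨fun x hx => ⟨(hx.1 p₀ hp₀).1, (key x).trans_lt hx.2⟩, fun x _ => key x⟩

/-- `IL_{J,q} ⊆ ℓ_{m_J,q}`, with `‖x‖_{m_J,q} ≤ sup_{p∈J} ‖x‖_{p,q}`. -/
theorem stmt18 (q : ℝ≥0∞) (hq1 : 1 ≤ q) (hq : q ≠ ∞)
    (J : Set ℝ≥0∞) (hJne : J.Nonempty) (hJ : J ⊆ Ico 1 ∞) :
    {x : ℕ → ℝ | (∀ p ∈ J, x ∈ seqLorentz p q) ∧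
        (⨆ p ∈ J, seqLorentzNorm x p q) < ∞}
      ⊆ seqLorentz (sInf J) q ∧
    ∀ x ∈ {x : ℕ → ℝ | (∀ p ∈ J, x ∈ seqLorentz p q) ∧
        (⨆ p ∈ J, seqLorentzNorm x p q) < ∞},
      seqLorentzNorm x (sInf J) q ≤ ⨆ p ∈ J, seqLorentzNorm x p q :=
  stmt18_general q hq J hJne hJ
end
end
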